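/- arXiv:math/0610623 — 3 statements merged into one kernel-verified Lean document; each statement's English description precedes it below -/
import Mathlib

section
/- For every u* ∈ ∂C(0), every v ∈ SSAT({u*},(0,+∞)) and every λ > 0, the point u* + λ(v − u*) belongs to SSAT({u*},(0,+∞)). -/
/-!
If `u*` minimizes `f(· - v)` over the convex set `C(0)`, it still minimizes `f(· - w)` for every
`w = u* + λ(v - u*)`, `λ > 0`: for `λ ≤ 1` by the triangle inequality through `v`, and for `λ > 1`
by comparing `x ∈ C(0)` with the point `u* + λ⁻¹(x - u*)` of `C(0)`, using homogeneity of `f`.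
Since the minimal value `λ f(u* - v)` is positive, strict convexity of the unit ball of `f` makes
this minimizer unique, so `sol w = u*`, and `f_d(w - u*) = λ f_d(v - u*) > 0`.
-/

open MeasureTheory Filter Set
open scoped Classical

noncomputable section

/-- The ambient space `ℝ^N` with the Euclidean structure. -/
abbrev Euc (N : ℕ) := EuclideanSpace ℝ (Fin N)

variable {N : ℕ}

/-- The cell `C((k_i))` : points whose coordinates in the basis `ψ` satisfy
`τ(k_i - 1/2) ≤ u_i ≤ τ(k_i + 1/2)`. -/
def cube (ψ : Module.Basis (Fin N) ℝ (Euc N)) (τ : ℝ) (k : Fin N → ℤ) : Set (Euc N) :=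
  {u | ∀ i, τ * ((k i : ℝ) - 1/2) ≤ ψ.repr u i ∧ ψ.repr u i ≤ τ * ((k i : ℝ) + 1/2)}

/-- The central cell `C(0)`. -/
def cube0 (ψ : Module.Basis (Fin N) ℝ (Euc N)) (τ : ℝ) : Set (Euc N) := cube ψ τ 0

/-- The set of active (saturated) coordinates `J(u)` for `u ∈ C(0)`. -/
def Jset (ψ : Module.Basis (Fin N) ℝ (Euc N)) (τ : ℝ) (u : Euc N) : Set (Fin N) :=
  {i | ψ.repr u i = τ / 2 ∨ ψ.repr u i = -(τ / 2)}

/-- `sol` is the solution map of the problems `(P)(u)` : `sol u` minimizes `f(v - u)` over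
`C(0)`.  (Under the hypotheses on `f` the minimizer is unique.) -/
def IsSol (ψ : Module.Basis (Fin N) ℝ (Euc N)) (τ : ℝ) (f : Euc N → ℝ) (sol : Euc N → Euc N) : Prop :=
  ∀ u, sol u ∈ cube0 ψ τ ∧ IsMinOn (fun v => f (v - u)) (cube0 ψ τ) (sol u)

/-- `SSAT(C, A)` : the set of data `u` whose solution `sol u` lies in `C` and with
`f_d(u - sol u) ∈ A`. -/
def SSAT (sol : Euc N → Euc N) (fd : Euc N → ℝ) (C : Set (Euc N)) (A : Set ℝ) : Set (Euc N) :=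
  {u | sol u ∈ C ∧ fd (u - sol u) ∈ A}

/-- `f` is a norm. -/
structure IsNormLike (f : Euc N → ℝ) : Prop where
  add_le : ∀ x y, f (x + y) ≤ f x + f y
  smul_eq : ∀ (c : ℝ) (x), f (c • x) = |c| * f x
  eq_zero_iff : ∀ x, f x = 0 ↔ x = 0

/-- `f` is a norm, continuously differentiable away from `0`, with strictly convex
level sets. -/
structure GoodNorm (f : Euc N → ℝ) : Prop where
  add_le : ∀ x y, f (x + y) ≤ f x + f y
  smul_eq : ∀ (c : ℝ) (x), f (c • x) = |c| * f x
  eq_zero_iff : ∀ x, f x = 0 ↔ x = 0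
  smooth : ∀ x : Euc N, x ≠ 0 → ContDiffAt ℝ 1 f x
  sconv : StrictConvex ℝ {x : Euc N | f x ≤ 1}

/-- `f` is curved : the normalized-gradient map `h : {f = 1} → S^{N-1}`,
`h(u) = ∇f(u)/‖∇f(u)‖₂`, is a bijection whose inverse is Lipschitz. -/
def Curved (f : Euc N → ℝ) : Prop :=
  ∃ (L : NNReal) (g : Euc N → Euc N),
    LipschitzOnWith L g (Metric.sphere (0 : Euc N) 1) ∧
    (∀ u : Euc N, f u = 1 → g (‖gradient f u‖⁻¹ • gradient f u) = u) ∧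
    ∀ w ∈ Metric.sphere (0 : Euc N) 1, ∃ u, f u = 1 ∧ ‖gradient f u‖⁻¹ • gradient f u = w

/-- The projection `p` onto `Span(ψ_j : j ∈ J)` along the other basis vectors. -/
def pJ (ψ : Module.Basis (Fin N) ℝ (Euc N)) (J : Set (Fin N)) (x : Euc N) : Euc N :=
  ∑ j : Fin N, if j ∈ J then ψ.repr x j • ψ j else 0

/-- The "center" `u^c` of the face of `u` : keep the saturated coordinates, zero out
the others. -/
def ucOf (ψ : Module.Basis (Fin N) ℝ (Euc N)) (τ : ℝ) (u : Euc N) : Euc N :=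
  pJ ψ (Jset ψ τ u) u

/-- The equivalence class `ū` of `u` in `C(0)` : same active set. -/
def ubar (ψ : Module.Basis (Fin N) ℝ (Euc N)) (τ : ℝ) (u : Euc N) : Set (Euc N) :=
  {w ∈ cube0 ψ τ | Jset ψ τ w = Jset ψ τ u}

/-- The discrete grid `D = τ ℤ^N` (in the basis `ψ`). -/
def Dgrid (ψ : Module.Basis (Fin N) ℝ (Euc N)) (τ : ℝ) : Set (Euc N) :=
  {x | ∃ k : Fin N → ℤ, x = ∑ i, (τ * (k i : ℝ)) • ψ i}

/-- The slice `Dom((k_j)_{j∈J})` of the grid : grid points whose `J`-coordinates are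
the prescribed `τ k_j`. -/
def DomSlice (ψ : Module.Basis (Fin N) ℝ (Euc N)) (τ : ℝ) (J : Set (Fin N)) (k : Fin N → ℤ) :
    Set (Euc N) :=
  {x ∈ Dgrid ψ τ | ∀ j ∈ J, ψ.repr x j = τ * (k j : ℝ)}

/-- The grid `τ ℤ^J` inside `Span(ψ_j : j ∈ J)`. -/
def JgridJ (ψ : Module.Basis (Fin N) ℝ (Euc N)) (τ : ℝ) (J : Set (Fin N)) : Set (Euc N) :=
  {x | ∃ k : Fin N → ℤ, x = ∑ j : Fin N, if j ∈ J then (τ * (k j : ℝ)) • ψ j else 0}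

/-- `Leb_K(S)` : the Lebesgue measure (in `ℝ^{#J}`) of the set of `J`-indexed coordinate
families whose combination lies in `S`. -/
def lebJ (ψ : Module.Basis (Fin N) ℝ (Euc N)) (J : Set (Fin N)) (S : Set (Euc N)) : ENNReal :=
  volume {a : ↥J → ℝ | (∑ j : ↥J, a j • ψ (j : Fin N)) ∈ S}

/-- The set `C_K` of centers of the faces of codimension `K`. -/
def CKset (ψ : Module.Basis (Fin N) ℝ (Euc N)) (τ : ℝ) (K : ℕ) : Set (Euc N) :=
  {x | ∃ (J : Set (Fin N)) (ε : Fin N → ℝ), J.ncard = K ∧ (∀ j ∈ J, ε j = 1 ∨ ε j = -1) ∧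
    x = ∑ j : Fin N, if j ∈ J then (ε j * (τ / 2)) • ψ j else 0}

/-- The set `Cl_K` of boundary points of `C(0)` with exactly `K` active constraints. -/
def ClKset (ψ : Module.Basis (Fin N) ℝ (Euc N)) (τ : ℝ) (K : ℕ) : Set (Euc N) :=
  {u | u ∈ frontier (cube0 ψ τ) ∧ (Jset ψ τ u).ncard = K}

/-- `k_i(u)` : the unique integer with `τ(k_i - 1/2) ≤ u_i < τ(k_i + 1/2)`. -/
def kfun (ψ : Module.Basis (Fin N) ℝ (Euc N)) (τ : ℝ) (u : Euc N) (i : Fin N) : ℤ :=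
  ⌊ψ.repr u i / τ + 1 / 2⌋

/-- The grid point `τ Σ k_i(u) ψ_i` approximating `u`. -/
def gridpt (ψ : Module.Basis (Fin N) ℝ (Euc N)) (τ : ℝ) (u : Euc N) : Euc N :=
  ∑ i, (τ * (kfun ψ τ u i : ℝ)) • ψ i

/-- `J̃(u)` : the active set of the solution of `(P)` at the grid point of `u`. -/
def Jtil (ψ : Module.Basis (Fin N) ℝ (Euc N)) (τ : ℝ) (sol : Euc N → Euc N) (u : Euc N) :
    Set (Fin N) :=
  Jset ψ τ (sol (gridpt ψ τ u))

open scoped Topology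

namespace Seminorm

variable {E : Type*} [AddCommGroup E] [Module ℝ E] (p : Seminorm ℝ E)

theorem isMinOn_sub_homothety {C : Set E} (hC : Convex ℝ C) {x₀ v : E} (hx₀ : x₀ ∈ C)
    (hmin : IsMinOn (fun x => p (x - v)) C x₀) {lam : ℝ} (hlam : 0 < lam) :
    IsMinOn (fun x => p (x - (x₀ + lam • (v - x₀)))) C x₀ := by
  intro x hx
  set w := x₀ + lam • (v - x₀)
  have hx₀w : p (x₀ - w) = lam * p (x₀ - v) := by
    rw [show x₀ - w = lam • (x₀ - v) by simp only [w]; module, map_smul_eq_mul,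
      Real.norm_of_nonneg hlam.le]
  change p (x₀ - w) ≤ p (x - w)
  rcases le_or_gt lam 1 with hle | hgt
  · have hwv : p (w - v) = (1 - lam) * p (x₀ - v) := by
      rw [show w - v = (1 - lam) • (x₀ - v) by simp only [w]; module, map_smul_eq_mul,
        Real.norm_of_nonneg (sub_nonneg.2 hle)]
    have htri : p (x - v) ≤ p (x - w) + p (w - v) := by
      simpa only [sub_add_sub_cancel] using map_add_le_add p (x - w) (w - v)
    have hxv := hmin hx
    simp only [Set.mem_ofPred_eq] at hxv
    linarith
  · have hinv : 0 < lam⁻¹ := inv_pos.2 hlam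
    have hx' : x₀ + lam⁻¹ • (x - x₀) ∈ C := by
      simpa [smul_sub, sub_smul, add_sub, add_comm, add_left_comm] using
        hC hx hx₀ hinv.le (sub_nonneg.2 (inv_le_one_of_one_le₀ hgt.le)) (add_sub_cancel _ _)
    have hcomp : x₀ + lam⁻¹ • (x - x₀) - v = lam⁻¹ • (x - w) := by
      simp only [w, smul_sub, smul_add, smul_smul, inv_mul_cancel₀ hlam.ne']
      module
    have hx'v := hmin hx'
    simp only [Set.mem_ofPred_eq, hcomp, map_smul_eq_mul, Real.norm_of_nonneg hinv.le] at hx'v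
    calc p (x₀ - w) = lam * p (x₀ - v) := hx₀w
      _ ≤ lam * (lam⁻¹ * p (x - w)) := mul_le_mul_of_nonneg_left hx'v hlam.le
      _ = p (x - w) := by field_simp

variable [TopologicalSpace E] [ContinuousSMul ℝ E]

theorem lt_one_of_mem_interior {z : E} (hz : z ∈ interior {x | p x ≤ 1}) : p z < 1 := by
  have hnear : ∀ᶠ t : ℝ in 𝓝 1, t • z ∈ interior {x | p x ≤ 1} :=
    (continuous_id.smul continuous_const).continuousAt.preimage_mem_nhds
      (by simpa using isOpen_interior.mem_nhds hz)
  obtain ⟨t, ht, ht1⟩ := (hnear.and_frequently (frequently_gt_nhds 1)).exists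
  have htz : t * p z ≤ 1 := by
    simpa [map_smul_eq_mul, Real.norm_of_nonneg (zero_le_one.trans ht1.le)] using
      interior_subset ht
  nlinarith [apply_nonneg p z]

theorem eq_of_isMinOn_sub (hp : StrictConvex ℝ {x | p x ≤ 1}) {C : Set E} (hC : Convex ℝ C)
    {w x y : E} (hx : x ∈ C) (hy : y ∈ C) (hxmin : IsMinOn (fun z => p (z - w)) C x)
    (hymin : IsMinOn (fun z => p (z - w)) C y) (hpos : 0 < p (x - w)) : x = y := by
  by_contra hne
  set m := p (x - w)
  have hyw : p (y - w) = m := le_antisymm (hymin hx) (hxmin hy)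
  have hunit : ∀ z, p (z - w) = m → m⁻¹ • (z - w) ∈ {x | p x ≤ 1} := fun z hz => by
    simp [map_smul_eq_mul, hz, abs_of_pos hpos, hpos.ne']
  have hab : m⁻¹ • (x - w) ≠ m⁻¹ • (y - w) := fun h =>
    hne (sub_left_injective (smul_right_injective E (inv_ne_zero hpos.ne') h))
  have hmid := p.lt_one_of_mem_interior
    (hp (hunit x rfl) (hunit y hyw) hab one_half_pos one_half_pos (add_halves 1))
  have hq : (1 / 2 : ℝ) • x + (1 / 2 : ℝ) • y - w
      = m • ((1 / 2 : ℝ) • m⁻¹ • (x - w) + (1 / 2 : ℝ) • m⁻¹ • (y - w)) := by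
    rw [smul_add, smul_smul, smul_smul, smul_smul, smul_smul,
      show m * (1 / 2) * m⁻¹ = 1 / 2 by field_simp]
    module
  have hxq := hxmin (hC hx hy one_half_pos.le one_half_pos.le (add_halves 1))
  simp only [Set.mem_ofPred_eq, hq, map_smul_eq_mul, Real.norm_of_nonneg hpos.le] at hxq
  nlinarith

end Seminorm

theorem convex_cube (ψ : Module.Basis (Fin N) ℝ (Euc N)) (τ : ℝ) (k : Fin N → ℤ) :
    Convex ℝ (cube ψ τ k) := by
  have hcube : cube ψ τ k =
      ⋂ i, ψ.coord i ⁻¹' Icc (τ * ((k i : ℝ) - 1 / 2)) (τ * ((k i : ℝ) + 1 / 2)) := by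
    ext u
    simp [cube]
  rw [hcube]
  exact convex_iInter fun i => (convex_Icc _ _).linear_preimage (ψ.coord i)

def GoodNorm.toSeminorm {f : Euc N → ℝ} (hf : GoodNorm f) : Seminorm ℝ (Euc N) :=
  Seminorm.of f hf.add_le fun c x => by rw [hf.smul_eq, Real.norm_eq_abs]

theorem stmt2_general {N : ℕ} (ψ : Module.Basis (Fin N) ℝ (Euc N)) (τ : ℝ)
    (f : Euc N → ℝ) (hf : GoodNorm f) (fd : Euc N → ℝ) (hfd : IsNormLike fd)
    (sol : Euc N → Euc N) (hsol : IsSol ψ τ f sol)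
    (us : Euc N) (v : Euc N) (hv : v ∈ SSAT sol fd {us} (Set.Ioi (0 : ℝ)))
    (lam : ℝ) (hlam : 0 < lam) :
    us + lam • (v - us) ∈ SSAT sol fd {us} (Set.Ioi (0 : ℝ)) := by
  obtain ⟨hsolv, hfdv⟩ := hv
  rw [Set.mem_singleton_iff] at hsolv
  rw [hsolv, Set.mem_Ioi] at hfdv
  have hvus : v - us ≠ 0 := fun h => by simp [h, (hfd.eq_zero_iff 0).2 rfl] at hfdv
  set w := us + lam • (v - us)
  have husC : us ∈ cube0 ψ τ := hsolv ▸ (hsol v).1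
  have hmin : IsMinOn (fun x => hf.toSeminorm (x - w)) (cube0 ψ τ) us :=
    hf.toSeminorm.isMinOn_sub_homothety (convex_cube ψ τ 0) husC (hsolv ▸ (hsol v).2) hlam
  have hpos : 0 < f (us - w) := by
    have hne : us - v ≠ 0 := by rwa [← neg_sub, neg_ne_zero]
    rw [show us - w = lam • (us - v) by module, hf.smul_eq, abs_of_pos hlam]
    exact mul_pos hlam ((apply_nonneg hf.toSeminorm _).lt_of_ne' (mt (hf.eq_zero_iff _).1 hne))
  have hsolw : sol w = us := (hf.toSeminorm.eq_of_isMinOn_sub hf.sconv (convex_cube ψ τ 0) husC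
    (hsol w).1 hmin (hsol w).2 hpos).symm
  refine ⟨hsolw, ?_⟩
  rw [Set.mem_Ioi, hsolw, show w - us = lam • (v - us) by module, hfd.smul_eq, abs_of_pos hlam]
  exact mul_pos hlam hfdv

/-- `SSAT({u*},(0,∞))` is stable under the dilations centered at `u*`. -/
theorem stmt2 {N : ℕ} (hN : 1 ≤ N) (ψ : Module.Basis (Fin N) ℝ (Euc N)) (τ : ℝ) (hτ : 0 < τ)
    (f : Euc N → ℝ) (hf : GoodNorm f) (fd : Euc N → ℝ) (hfd : IsNormLike fd)
    (sol : Euc N → Euc N) (hsol : IsSol ψ τ f sol)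
    (us : Euc N) (hus : us ∈ frontier (cube0 ψ τ))
    (v : Euc N) (hv : v ∈ SSAT sol fd {us} (Set.Ioi (0 : ℝ)))
    (lam : ℝ) (hlam : 0 < lam) :
    us + lam • (v - us) ∈ SSAT sol fd {us} (Set.Ioi (0 : ℝ)) :=
  stmt2_general ψ τ f hf fd hfd sol hsol us v hv lam hlam
end
end

section
/- If f is curved, then for every u* ∈ ∂C(0) the set SSAT({u*},{1}) is nonempty and compact. -/
open MeasureTheory Filter Set
open scoped Classical

noncomputable section

variable {N : ℕ}

/-!
A boundary point `u*` of `C(0)` saturates some coordinate, so `±` that coordinate is a linear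
functional `φ` maximal on `C(0)` at `u*`. Let `x` be a norming vector of `φ` for `f`, i.e.
`f x ≤ 1` and `φ ≤ φ x • f`. Then for `s ≥ 0` no point of `C(0)` is `f`-closer to `u* + s x`
than `u*`, and strict convexity of the level sets makes `u*` the solution of `(P)(u* + s x)`;
`s = 1 / f_d x` lands in `SSAT({u*},{1})`. That set is closed (the minimality condition is closed
in the datum) and lies on an `f_d`-sphere, which is compact as all norms on `ℝ^N` are equivalent.
-/

open Topology

namespace IsNormLike

variable {f : Euc N → ℝ}

lemma map_zero (hf : IsNormLike f) : f 0 = 0 :=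
  (hf.eq_zero_iff 0).2 rfl

lemma map_neg (hf : IsNormLike f) (x : Euc N) : f (-x) = f x := by
  simpa using hf.smul_eq (-1) x

lemma map_smul_of_nonneg (hf : IsNormLike f) {c : ℝ} (hc : 0 ≤ c) (x : Euc N) :
    f (c • x) = c * f x := by
  rw [hf.smul_eq, abs_of_nonneg hc]

lemma nonneg (hf : IsNormLike f) (x : Euc N) : 0 ≤ f x := by
  have h := hf.add_le x (-x)
  rw [add_neg_cancel, hf.map_zero, hf.map_neg] at h
  linarith

lemma pos (hf : IsNormLike f) {x : Euc N} (hx : x ≠ 0) : 0 < f x :=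
  (hf.nonneg x).lt_of_ne fun h => hx ((hf.eq_zero_iff x).1 h.symm)

lemma convexOn (hf : IsNormLike f) : ConvexOn ℝ univ f :=
  ⟨convex_univ, fun x _ y _ a b ha hb _ => by
    simpa only [hf.map_smul_of_nonneg ha, hf.map_smul_of_nonneg hb, smul_eq_mul]
      using hf.add_le (a • x) (b • y)⟩

lemma continuous (hf : IsNormLike f) : Continuous f :=
  hf.convexOn.locallyLipschitz.continuous

lemma exists_pos_mul_norm_le (hf : IsNormLike f) : ∃ c, 0 < c ∧ ∀ x, c * ‖x‖ ≤ f x := by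
  rcases subsingleton_or_nontrivial (Euc N) with _ | _
  · exact ⟨1, one_pos, fun x => by simp [Subsingleton.elim x 0, hf.map_zero]⟩
  obtain ⟨x₀, hx₀, hmin⟩ := (isCompact_sphere (0 : Euc N) 1).exists_isMinOn
    (NormedSpace.sphere_nonempty.2 zero_le_one) hf.continuous.continuousOn
  have hx₀0 : x₀ ≠ 0 := ne_zero_of_mem_unit_sphere ⟨x₀, hx₀⟩
  refine ⟨f x₀, hf.pos hx₀0, fun x => ?_⟩
  rcases eq_or_ne x 0 with rfl | hx
  · simp [hf.map_zero]
  have hnx : 0 < ‖x‖ := norm_pos_iff.2 hx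
  have hunit : ‖x‖⁻¹ • x ∈ Metric.sphere (0 : Euc N) 1 := by
    simp [norm_smul, hnx.ne']
  calc f x₀ * ‖x‖ ≤ f (‖x‖⁻¹ • x) * ‖x‖ := by gcongr; exact hmin hunit
    _ = f x := by
      rw [hf.map_smul_of_nonneg (inv_nonneg.2 hnx.le), mul_comm, ← mul_assoc,
        mul_inv_cancel₀ hnx.ne', one_mul]

lemma isCompact_setOf_sub_le (hf : IsNormLike f) (a : Euc N) (r : ℝ) :
    IsCompact {x | f (x - a) ≤ r} := by
  obtain ⟨c, hc, hcf⟩ := hf.exists_pos_mul_norm_le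
  refine (isCompact_closedBall a (r / c)).of_isClosed_subset
    (isClosed_le (hf.continuous.comp (continuous_id.sub continuous_const)) continuous_const)
    fun x hx => ?_
  rw [Metric.mem_closedBall, dist_eq_norm, le_div_iff₀ hc, mul_comm]
  exact (hcf _).trans hx

lemma lt_one_of_mem_interior (hf : IsNormLike f) {z : Euc N}
    (hz : z ∈ interior {x | f x ≤ 1}) : f z < 1 := by
  have hlim : Tendsto (fun t : ℝ => t • z) (𝓝[>] 1) (𝓝 z) :=
    ((continuous_id.smul continuous_const).tendsto' 1 z (one_smul ℝ z)).mono_left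
      nhdsWithin_le_nhds
  obtain ⟨t, hzt, ht⟩ :=
    ((hlim.eventually (isOpen_interior.mem_nhds hz)).and self_mem_nhdsWithin).exists
  have ht : 1 < t := ht
  have hle : t * f z ≤ 1 := by
    rw [← hf.map_smul_of_nonneg (zero_le_one.trans ht.le)]
    exact interior_subset (s := {x | f x ≤ 1}) hzt
  nlinarith [hf.nonneg z]

/-- Since `{f ≤ 1}` is compact, the dual norm of `φ` is attained. -/
lemma exists_norming_vector (hf : IsNormLike f) {φ : Euc N →ₗ[ℝ] ℝ} (hφ : φ ≠ 0) :
    ∃ x, f x ≤ 1 ∧ 0 < φ x ∧ ∀ y, φ y ≤ φ x * f y := by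
  obtain ⟨x, hx, hmax⟩ := (hf.isCompact_setOf_sub_le 0 1).exists_isMaxOn
    ⟨0, by simp [hf.map_zero]⟩ (LinearMap.continuous_of_finiteDimensional φ).continuousOn
  replace hx : f x ≤ 1 := by simpa using hx
  have hnorming : ∀ y, φ y ≤ φ x * f y := by
    intro y
    rcases eq_or_ne y 0 with rfl | hy
    · simp [hf.map_zero]
    have hfy := hf.pos hy
    have h : φ ((f y)⁻¹ • y) ≤ φ x := hmax (by
      simp [hf.map_smul_of_nonneg (inv_nonneg.2 hfy.le), hfy.ne'])
    rwa [map_smul, smul_eq_mul, inv_mul_le_iff₀ hfy, mul_comm] at h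
  obtain ⟨y, hy⟩ : ∃ y, φ y ≠ 0 := by
    by_contra! h
    exact hφ (LinearMap.ext h)
  refine ⟨x, hx, ?_, hnorming⟩
  have h₁ := hnorming y
  have h₂ := hnorming (-y)
  rw [φ.map_neg, hf.map_neg] at h₂
  by_contra! hφx
  exact hy (by nlinarith [hf.nonneg y])

/-- A vector norming a functional that is maximal on `C` at `us` points into the normal cone of
`C` at `us`: every point of the ray `us + s • x` projects onto `us`. -/
lemma isMinOn_sub_of_isMaxOn (hf : IsNormLike f) {C : Set (Euc N)} {φ : Euc N →ₗ[ℝ] ℝ}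
    {us x : Euc N} (hmax : IsMaxOn φ C us) (hx : f x ≤ 1) (hφx : 0 < φ x)
    (hnorming : ∀ y, φ y ≤ φ x * f y) {s : ℝ} (hs : 0 ≤ s) :
    IsMinOn (fun v => f (v - (us + s • x))) C us := by
  intro v hv
  have hφ : s * φ x ≤ φ x * f (v - (us + s • x)) := by
    have h := hnorming (us + s • x - v)
    rw [map_sub, map_add, map_smul, smul_eq_mul, ← neg_sub v, hf.map_neg] at h
    linarith [isMaxOn_iff.1 hmax v hv]
  calc f (us - (us + s • x)) = s * f x := by
        rw [sub_add_cancel_left, hf.map_neg, hf.map_smul_of_nonneg hs]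
    _ ≤ s := mul_le_of_le_one_right hs hx
    _ ≤ f (v - (us + s • x)) := by nlinarith

end IsNormLike

namespace GoodNorm

variable {f : Euc N → ℝ}

lemma isNormLike (hf : GoodNorm f) : IsNormLike f :=
  ⟨hf.add_le, hf.smul_eq, hf.eq_zero_iff⟩

lemma combo_lt_of_ne (hf : GoodNorm f) {x y : Euc N} {r a b : ℝ} (hx : f x ≤ r) (hy : f y ≤ r)
    (hne : x ≠ y) (ha : 0 < a) (hb : 0 < b) (hab : a + b = 1) : f (a • x + b • y) < r := by
  have hn := hf.isNormLike
  have hr : 0 < r := by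
    by_contra! hr
    have hx0 := (hn.eq_zero_iff x).1 (le_antisymm (hx.trans hr) (hn.nonneg x))
    have hy0 := (hn.eq_zero_iff y).1 (le_antisymm (hy.trans hr) (hn.nonneg y))
    exact hne (hx0.trans hy0.symm)
  have hscale : ∀ z, f (r⁻¹ • z) ≤ 1 ↔ f z ≤ r := fun z => by
    rw [hn.map_smul_of_nonneg (inv_nonneg.2 hr.le), inv_mul_le_iff₀ hr, mul_one]
  have hlt := hn.lt_one_of_mem_interior <| hf.sconv ((hscale x).2 hx) ((hscale y).2 hy)
    (fun h => hne (smul_right_injective _ (inv_ne_zero hr.ne') h)) ha hb hab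
  rw [smul_comm a, smul_comm b, ← smul_add, hn.map_smul_of_nonneg (inv_nonneg.2 hr.le),
    inv_mul_lt_iff₀ hr, mul_one] at hlt
  exact hlt

lemma eq_of_isMinOn_sub (hf : GoodNorm f) {C : Set (Euc N)} (hC : Convex ℝ C) {u v w : Euc N}
    (hv : v ∈ C) (hw : w ∈ C) (hminv : IsMinOn (fun p => f (p - u)) C v)
    (hminw : IsMinOn (fun p => f (p - u)) C w) : v = w := by
  by_contra hne
  have hmid := hC hv hw (by norm_num : (0 : ℝ) ≤ 1 / 2) (by norm_num : (0 : ℝ) ≤ 1 / 2)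
    (by norm_num)
  have hlt := hf.combo_lt_of_ne (x := v - u) (y := w - u) le_rfl (isMinOn_iff.1 hminw v hv)
    (sub_left_injective.ne hne)
    (by norm_num : (0 : ℝ) < 1 / 2) (by norm_num : (0 : ℝ) < 1 / 2) (by norm_num)
  have hle := isMinOn_iff.1 hminv _ hmid
  have hcomb : (1 / 2 : ℝ) • (v - u) + (1 / 2 : ℝ) • (w - u)
      = (1 / 2 : ℝ) • v + (1 / 2 : ℝ) • w - u := by module
  rw [hcomb] at hlt
  exact hle.not_gt hlt

end GoodNorm

section Cube

variable {ψ : Module.Basis (Fin N) ℝ (Euc N)} {τ : ℝ}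

lemma cube0_eq_iInter :
    cube0 ψ τ = ⋂ i, ψ.coord i ⁻¹' Icc (-(τ / 2)) (τ / 2) := by
  ext u
  simp only [cube0, cube, mem_ofPred_eq, mem_iInter, mem_preimage, mem_Icc, Pi.zero_apply,
    Int.cast_zero, Module.Basis.coord_apply]
  refine forall_congr' fun i => and_congr ?_ ?_ <;> constructor <;> intro h <;> linarith

lemma convex_cube0 : Convex ℝ (cube0 ψ τ) := by
  rw [cube0_eq_iInter]
  exact convex_iInter fun i => (convex_Icc _ _).linear_preimage _

lemma isClosed_cube0 : IsClosed (cube0 ψ τ) := by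
  rw [cube0_eq_iInter]
  exact isClosed_iInter fun i =>
    isClosed_Icc.preimage (LinearMap.continuous_of_finiteDimensional _)

lemma Jset_nonempty_of_mem_frontier {us : Euc N} (hus : us ∈ frontier (cube0 ψ τ)) :
    (Jset ψ τ us).Nonempty := by
  by_contra hJ
  have husC : us ∈ cube0 ψ τ := isClosed_cube0.frontier_subset hus
  rw [cube0_eq_iInter] at husC hus
  refine hus.2 (interior_maximal (iInter_mono fun i => preimage_mono Ioo_subset_Icc_self)
    (isOpen_iInter_of_finite fun i =>
      isOpen_Ioo.preimage (LinearMap.continuous_of_finiteDimensional _))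
    (mem_iInter.2 fun i => ?_))
  have hi : i ∉ Jset ψ τ us := fun hi => hJ ⟨i, hi⟩
  simp only [Jset, mem_ofPred_eq, not_or] at hi
  have hbox := mem_iInter.1 husC i
  simp only [mem_preimage, Module.Basis.coord_apply, mem_Icc, mem_Ioo] at hbox ⊢
  exact ⟨hbox.1.lt_of_ne (Ne.symm hi.2), hbox.2.lt_of_ne hi.1⟩

lemma exists_isMaxOn_cube0_of_mem_frontier {us : Euc N} (hus : us ∈ frontier (cube0 ψ τ)) :
    ∃ φ : Euc N →ₗ[ℝ] ℝ, φ ≠ 0 ∧ IsMaxOn φ (cube0 ψ τ) us := by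
  obtain ⟨i, hi | hi⟩ := Jset_nonempty_of_mem_frontier hus
  · refine ⟨ψ.coord i, fun h => by simpa using LinearMap.congr_fun h (ψ i), fun v hv => ?_⟩
    rw [cube0_eq_iInter] at hv
    simpa [hi] using (mem_iInter.1 hv i).2
  · refine ⟨-ψ.coord i, fun h => by simpa using LinearMap.congr_fun h (ψ i), fun v hv => ?_⟩
    rw [cube0_eq_iInter] at hv
    simpa [hi] using neg_le.2 (mem_iInter.1 hv i).1

end Cube

lemma IsSol.eq_iff {ψ : Module.Basis (Fin N) ℝ (Euc N)} {τ : ℝ} {f : Euc N → ℝ}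
    {sol : Euc N → Euc N} (hsol : IsSol ψ τ f sol) (hf : GoodNorm f) {v : Euc N}
    (hv : v ∈ cube0 ψ τ) (u : Euc N) :
    sol u = v ↔ IsMinOn (fun p => f (p - u)) (cube0 ψ τ) v :=
  ⟨fun h => h ▸ (hsol u).2,
    fun h => hf.eq_of_isMinOn_sub convex_cube0 (hsol u).1 hv (hsol u).2 h⟩

lemma isClosed_setOf_isMinOn {X Y : Type*} [TopologicalSpace X] {g : Y → X → ℝ}
    (hg : ∀ y, Continuous (g y)) (C : Set Y) (y₀ : Y) :
    IsClosed {x | IsMinOn (g · x) C y₀} := by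
  simp only [isMinOn_iff, ofPred_forall]
  exact isClosed_biInter fun y _ => isClosed_le (hg y₀) (hg y)

theorem stmt4_general {N : ℕ} (ψ : Module.Basis (Fin N) ℝ (Euc N)) (τ : ℝ)
    (f : Euc N → ℝ) (hf : GoodNorm f)
    (fd : Euc N → ℝ) (hfd : IsNormLike fd)
    (sol : Euc N → Euc N) (hsol : IsSol ψ τ f sol)
    (us : Euc N) (hus : us ∈ frontier (cube0 ψ τ)) :
    (SSAT sol fd {us} ({1} : Set ℝ)).Nonempty ∧ IsCompact (SSAT sol fd {us} ({1} : Set ℝ)) := by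
  have hn := hf.isNormLike
  have husC : us ∈ cube0 ψ τ := isClosed_cube0.frontier_subset hus
  have hSSAT : SSAT sol fd {us} {1} =
      {p | IsMinOn (fun v => f (v - p)) (cube0 ψ τ) us} ∩ {p | fd (p - us) = 1} := by
    ext p
    simp only [SSAT, mem_ofPred_eq, mem_inter_iff, mem_singleton_iff, hsol.eq_iff hf husC]
    exact and_congr_right fun h => by rw [(hsol.eq_iff hf husC p).2 h]
  obtain ⟨φ, hφ, hmax⟩ := exists_isMaxOn_cube0_of_mem_frontier hus
  obtain ⟨x, hx, hφx, hnorming⟩ := hn.exists_norming_vector hφ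
  have hfdx : 0 < fd x := hfd.pos fun h => by simp [h] at hφx
  refine ⟨⟨us + (fd x)⁻¹ • x, ?_⟩, ?_⟩
  · rw [hSSAT]
    refine ⟨hn.isMinOn_sub_of_isMaxOn hmax hx hφx hnorming (inv_nonneg.2 hfdx.le), ?_⟩
    rw [mem_ofPred_eq, add_sub_cancel_left, hfd.map_smul_of_nonneg (inv_nonneg.2 hfdx.le),
      inv_mul_cancel₀ hfdx.ne']
  · refine (hfd.isCompact_setOf_sub_le us 1).of_isClosed_subset ?_
      fun p hp => (hSSAT ▸ hp).2.le
    rw [hSSAT]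
    exact (isClosed_setOf_isMinOn
      (fun v => hn.continuous.comp (continuous_const.sub continuous_id)) _ us).inter
      (isClosed_eq (hfd.continuous.comp (continuous_id.sub continuous_const)) continuous_const)

/-- if `f` is curved then `SSAT({u*},{1})` is nonempty and compact. -/
theorem stmt4 {N : ℕ} (hN : 1 ≤ N) (ψ : Module.Basis (Fin N) ℝ (Euc N)) (τ : ℝ) (hτ : 0 < τ)
    (f : Euc N → ℝ) (hf : GoodNorm f) (hcurved : Curved f)
    (fd : Euc N → ℝ) (hfd : IsNormLike fd)
    (sol : Euc N → Euc N) (hsol : IsSol ψ τ f sol)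
    (us : Euc N) (hus : us ∈ frontier (cube0 ψ τ)) :
    (SSAT sol fd {us} ({1} : Set ℝ)).Nonempty ∧ IsCompact (SSAT sol fd {us} ({1} : Set ℝ)) :=
  stmt4_general ψ τ f hf fd hfd sol hsol us hus
end
end

section
/- Let τ' > 0 and u* ∈ ∂C(0). Then the number of points of the grid D = {τ Σ_{i∈I} k_i ψ_i : (k_i) ∈ ℤ^N} lying in SSAT(ū*, (0, τ']) is at most the number of points of the form τ Σ_{j∈J(u*)} k_j ψ_j, (k_j)_{j∈J(u*)} ∈ ℤ^{J(u*)}, lying in p(SSAT(ū*, (0, τ'])), where p is the projection Σ_{i∈I} α_i ψ_i ↦ Σ_{j∈J(u*)} α_j ψ_j onto Span(ψ_j : j ∈ J(u*)). -/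
open MeasureTheory Filter Set
open scoped Classical

noncomputable section

variable {N : ℕ}

/-!
Projecting a grid point `u ∈ SSAT(ū*, ·)` onto its `J(u*)`-coordinates is injective. If two
grid points `u, u'` share these coordinates, their solutions `v, v'` both lie in `ū*`, so
each residual `v - u`, `v' - u'` is a local minimum of `f` along the segment joining them:
moving `v` towards `v'` while shifting it by a small multiple of `u' - u` stays in `C(0)`,
because `u' - u` vanishes on the saturated coordinates and the other coordinates of `v` lie
strictly inside `(-τ/2, τ/2)`. By convexity both residuals are global minima on the segment,
and strict convexity of the level sets forces `v - u = v' - u'`. Hence `u' - u = v' - v`,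
whose off-`J` coordinates are multiples of `τ` of absolute value `< τ`, hence zero.
-/

open Topology AffineMap

section Convexity

variable {E : Type*} [AddCommGroup E] [Module ℝ E]

theorem ConvexOn.le_lineMap_of_eventually_le {f : E → ℝ} (hf : ConvexOn ℝ univ f) {x y : E}
    (h : ∀ᶠ t in 𝓝[≥] (0 : ℝ), f x ≤ f (lineMap x y t)) :
    ∀ t ∈ Icc (0 : ℝ) 1, f x ≤ f (lineMap x y t) := by
  have hloc : IsLocalMinOn (f ∘ lineMap x y) (Icc (0 : ℝ) 1) 0 := by
    rw [IsLocalMinOn, IsMinFilter, nhdsWithin_Icc_eq_nhdsGE one_pos]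
    simpa using h
  have hconv : ConvexOn ℝ (Icc (0 : ℝ) 1) (f ∘ lineMap x y) :=
    (hf.comp_affineMap (lineMap x y)).subset (subset_univ _) (convex_Icc 0 1)
  intro t ht
  simpa using IsMinOn.of_isLocalMinOn_of_convexOn_Icc one_pos hloc hconv ht

variable [TopologicalSpace E] [ContinuousSMul ℝ E] {f : E → ℝ}

theorem lt_one_of_mem_interior_sublevel (hsmul : ∀ c : ℝ, 0 ≤ c → ∀ x, f (c • x) = c * f x)
    {z : E} (hz : z ∈ interior {w | f w ≤ 1}) : f z < 1 := by
  have hray : ∀ᶠ t in 𝓝[>] (1 : ℝ), t • z ∈ interior {w | f w ≤ 1} :=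
    (((continuous_id.smul continuous_const).tendsto' 1 z (one_smul ℝ z)).eventually
      (isOpen_interior.mem_nhds hz)).filter_mono nhdsWithin_le_nhds
  obtain ⟨t, htz, ht⟩ := (hray.and self_mem_nhdsWithin).exists
  have ht1 : 1 < t := ht
  have hle : t * f z ≤ 1 := by
    rw [← hsmul t (by linarith)]
    exact interior_subset (s := {w | f w ≤ 1}) htz
  by_contra! h
  nlinarith

theorem lt_of_strictConvex_sublevel (hsmul : ∀ c : ℝ, 0 ≤ c → ∀ x, f (c • x) = c * f x)
    (hsconv : StrictConvex ℝ {w | f w ≤ 1}) {x y : E} (hxy : x ≠ y) (hfxy : f x = f y)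
    (hpos : 0 < f x) : f (midpoint ℝ x y) < f x := by
  set c := f x
  have hunit : ∀ z, f z = c → f (c⁻¹ • z) = 1 := fun z hz => by
    rw [hsmul _ (inv_nonneg.mpr hpos.le), hz, inv_mul_cancel₀ hpos.ne']
  have hne : c⁻¹ • x ≠ c⁻¹ • y := (smul_right_injective E (inv_ne_zero hpos.ne')).ne hxy
  have hmid := lt_one_of_mem_interior_sublevel hsmul <|
    hsconv (hunit x rfl).le (hunit y hfxy.symm).le hne one_half_pos one_half_pos (by norm_num)
  have hrw : (1 / 2 : ℝ) • c⁻¹ • x + (1 / 2 : ℝ) • c⁻¹ • y = c⁻¹ • midpoint ℝ x y := by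
    rw [midpoint_eq_smul_add, invOf_eq_inv]
    module
  rw [hrw, hsmul _ (inv_nonneg.mpr hpos.le), inv_mul_lt_iff₀ hpos, mul_one] at hmid
  exact hmid

end Convexity

namespace GoodNorm

variable {f : Euc N → ℝ}

theorem smul_of_nonneg (hf : GoodNorm f) (c : ℝ) (hc : 0 ≤ c) (x : Euc N) :
    f (c • x) = c * f x := by
  rw [hf.smul_eq, abs_of_nonneg hc]

theorem nonneg (hf : GoodNorm f) (x : Euc N) : 0 ≤ f x := by
  have h0 : f 0 = 0 := (hf.eq_zero_iff 0).mpr rfl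
  have hneg : f (-x) = f x := by simpa using hf.smul_eq (-1) x
  have := hf.add_le x (-x)
  rw [add_neg_cancel, h0, hneg] at this
  linarith

theorem convexOn (hf : GoodNorm f) : ConvexOn ℝ univ f := by
  refine ⟨convex_univ, fun x _ y _ a b ha hb _ => ?_⟩
  calc f (a • x + b • y) ≤ f (a • x) + f (b • y) := hf.add_le _ _
    _ = a • f x + b • f y := by rw [hf.smul_of_nonneg a ha, hf.smul_of_nonneg b hb]; rfl

theorem eq_of_eventually_le_lineMap (hf : GoodNorm f) {x y : Euc N}
    (hx : ∀ᶠ t in 𝓝[≥] (0 : ℝ), f x ≤ f (lineMap x y t))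
    (hy : ∀ᶠ t in 𝓝[≥] (0 : ℝ), f y ≤ f (lineMap y x t)) : x = y := by
  have hxy := hf.convexOn.le_lineMap_of_eventually_le hx
  have hyx := hf.convexOn.le_lineMap_of_eventually_le hy
  have hfxy : f x = f y := le_antisymm
    (by simpa using hxy 1 (right_mem_Icc.mpr zero_le_one))
    (by simpa using hyx 1 (right_mem_Icc.mpr zero_le_one))
  by_contra hne
  have hpos : 0 < f x := by
    refine (hf.nonneg x).lt_of_ne' fun hx0 => hne ?_
    rw [(hf.eq_zero_iff x).mp hx0, (hf.eq_zero_iff y).mp (hfxy ▸ hx0)]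
  have hmid := hxy (1 / 2) ⟨by norm_num, by norm_num⟩
  rw [lineMap_one_half] at hmid
  linarith [lt_of_strictConvex_sublevel hf.smul_of_nonneg hf.sconv hne hfxy hpos]

end GoodNorm

variable {ψ : Module.Basis (Fin N) ℝ (Euc N)} {τ : ℝ}

theorem mem_cube0_iff {u : Euc N} : u ∈ cube0 ψ τ ↔ ∀ i, |ψ.repr u i| ≤ τ / 2 := by
  simp only [cube0, cube, mem_ofPred_eq, Pi.zero_apply, Int.cast_zero, abs_le]
  ring_nf

theorem abs_repr_lt_of_notMem_Jset {v : Euc N} (hv : v ∈ cube0 ψ τ) {i : Fin N}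
    (hi : i ∉ Jset ψ τ v) : |ψ.repr v i| < τ / 2 :=
  (mem_cube0_iff.mp hv i).lt_of_ne fun h => hi (eq_or_eq_neg_of_abs_eq h)

theorem eventually_lineMap_sub_smul_mem_cube0 {v w δ : Euc N} (hv : v ∈ cube0 ψ τ)
    (hw : w ∈ cube0 ψ τ) (hδ : ∀ j ∈ Jset ψ τ v, ψ.repr δ j = 0) :
    ∀ᶠ t in 𝓝[≥] (0 : ℝ), lineMap v w t - t • δ ∈ cube0 ψ τ := by
  have hcoord : ∀ t i, ψ.repr (lineMap v w t - t • δ) i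
      = (1 - t) * ψ.repr v i + t * ψ.repr w i - t * ψ.repr δ i := fun t i => by
    simp [lineMap_apply_module]
  have hsmall : ∀ᶠ t in 𝓝[≥] (0 : ℝ), t ∈ Icc (0 : ℝ) 1 :=
    Icc_mem_nhdsGE zero_lt_one
  simp_rw [mem_cube0_iff, hcoord, eventually_all]
  intro i
  by_cases hi : i ∈ Jset ψ τ v
  · filter_upwards [hsmall] with t ht
    rw [hδ i hi, mul_zero, sub_zero]
    calc |(1 - t) * ψ.repr v i + t * ψ.repr w i|
        ≤ (1 - t) * |ψ.repr v i| + t * |ψ.repr w i| := by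
          refine (abs_add_le _ _).trans_eq ?_
          rw [abs_mul, abs_mul, abs_of_nonneg (sub_nonneg.mpr ht.2), abs_of_nonneg ht.1]
      _ ≤ (1 - t) * (τ / 2) + t * (τ / 2) := by
          gcongr
          · linarith [ht.2]
          · exact mem_cube0_iff.mp hv i
          · exact ht.1
          · exact mem_cube0_iff.mp hw i
      _ = τ / 2 := by ring
  · have hcont : Continuous fun t : ℝ =>
        |(1 - t) * ψ.repr v i + t * ψ.repr w i - t * ψ.repr δ i| := by fun_prop
    have hlt := hcont.continuousAt.eventually_lt (continuousAt_const (y := τ / 2)) (x₀ := 0)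
      (by simpa using abs_repr_lt_of_notMem_Jset hv hi)
    exact (hlt.filter_mono nhdsWithin_le_nhds).mono fun _ h => h.le

theorem pJ_repr (J : Set (Fin N)) (x : Euc N) (j : Fin N) :
    ψ.repr (pJ ψ J x) j = if j ∈ J then ψ.repr x j else 0 := by
  have hpJ : pJ ψ J x = ∑ i, (if i ∈ J then ψ.repr x i else 0) • ψ i := by
    simp only [pJ, ite_smul, zero_smul]
  rw [hpJ, ψ.repr_sum_self]

theorem mem_Dgrid_iff {x : Euc N} :
    x ∈ Dgrid ψ τ ↔ ∃ k : Fin N → ℤ, ∀ i, ψ.repr x i = τ * k i := by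
  refine exists_congr fun k => ⟨fun hx i => ?_, fun hx => ?_⟩
  · rw [hx, ψ.repr_sum_self]
  · simp_rw [← hx]
    exact (ψ.sum_repr x).symm

theorem pJ_mem_JgridJ (J : Set (Fin N)) {x : Euc N} (hx : x ∈ Dgrid ψ τ) :
    pJ ψ J x ∈ JgridJ ψ τ J := by
  obtain ⟨k, hk⟩ := mem_Dgrid_iff.mp hx
  exact ⟨k, by simp only [pJ, hk]⟩

theorem Int.eq_zero_of_abs_mul_lt_self {k : ℤ} (h : |τ * k| < τ) : k = 0 := by
  have hτ : 0 < τ := (abs_nonneg _).trans_lt h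
  rw [abs_mul, abs_of_pos hτ, mul_lt_iff_lt_one_right hτ] at h
  exact Int.abs_lt_one_iff.mp (by exact_mod_cast h)

namespace IsSol

variable {f : Euc N → ℝ} {sol : Euc N → Euc N}

theorem eventually_le_lineMap (hsol : IsSol ψ τ f sol) {u u' : Euc N}
    (hδ : ∀ j ∈ Jset ψ τ (sol u), ψ.repr u j = ψ.repr u' j) :
    ∀ᶠ t in 𝓝[≥] (0 : ℝ), f (sol u - u) ≤ f (lineMap (sol u - u) (sol u' - u') t) := by
  have hδ' : ∀ j ∈ Jset ψ τ (sol u), ψ.repr (u' - u) j = 0 := fun j hj => by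
    simp [hδ j hj]
  filter_upwards [eventually_lineMap_sub_smul_mem_cube0 (hsol u).1 (hsol u').1 hδ'] with t ht
  have hrw : lineMap (sol u - u) (sol u' - u') t
      = lineMap (sol u) (sol u') t - t • (u' - u) - u := by
    simp only [lineMap_apply_module]
    module
  rw [hrw]
  exact (hsol u).2 ht

theorem sub_eq_sub_of_repr_eq (hf : GoodNorm f) (hsol : IsSol ψ τ f sol) {u u' : Euc N}
    (hJ : Jset ψ τ (sol u') = Jset ψ τ (sol u))
    (hδ : ∀ j ∈ Jset ψ τ (sol u), ψ.repr u j = ψ.repr u' j) :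
    sol u - u = sol u' - u' :=
  hf.eq_of_eventually_le_lineMap (hsol.eventually_le_lineMap hδ)
    (hsol.eventually_le_lineMap fun j hj => (hδ j (hJ ▸ hj)).symm)

theorem injOn_pJ (hf : GoodNorm f) (hsol : IsSol ψ τ f sol) (fd : Euc N → ℝ) (us : Euc N)
    (A : Set ℝ) : InjOn (pJ ψ (Jset ψ τ us)) (SSAT sol fd (ubar ψ τ us) A ∩ Dgrid ψ τ) := by
  rintro u ⟨⟨⟨-, hJu⟩, -⟩, hu⟩ u' ⟨⟨⟨-, hJu'⟩, -⟩, hu'⟩ hp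
  have hδ : ∀ j ∈ Jset ψ τ (sol u), ψ.repr u j = ψ.repr u' j := fun j hj => by
    rw [hJu] at hj
    simpa [pJ_repr, hj] using congrArg (fun x => ψ.repr x j) hp
  have hres := hsol.sub_eq_sub_of_repr_eq hf (hJu'.trans hJu.symm) hδ
  obtain ⟨k, hk⟩ := mem_Dgrid_iff.mp hu
  obtain ⟨k', hk'⟩ := mem_Dgrid_iff.mp hu'
  refine ψ.repr.injective (Finsupp.ext fun i => ?_)
  by_cases hi : i ∈ Jset ψ τ (sol u)
  · exact hδ i hi
  · have hi' : i ∉ Jset ψ τ (sol u') := hJu'.trans hJu.symm ▸ hi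
    have hdiff : ψ.repr u' i - ψ.repr u i = ψ.repr (sol u') i - ψ.repr (sol u) i := by
      have := congrArg (fun x => ψ.repr x i) hres
      simp only [map_sub, Finsupp.sub_apply] at this
      linarith
    have hlt : |τ * ((k' i - k i : ℤ) : ℝ)| < τ := by
      have := abs_repr_lt_of_notMem_Jset (hsol u).1 hi
      have := abs_repr_lt_of_notMem_Jset (hsol u').1 hi'
      push_cast
      rw [mul_sub, ← hk, ← hk', hdiff]
      exact (abs_sub _ _).trans_lt (by linarith)
    rw [hk, hk', sub_eq_zero.mp (Int.eq_zero_of_abs_mul_lt_self hlt)]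

end IsSol

theorem stmt9_general {N : ℕ} (ψ : Module.Basis (Fin N) ℝ (Euc N)) (τ : ℝ)
    (f : Euc N → ℝ) (hf : GoodNorm f) (fd : Euc N → ℝ)
    (sol : Euc N → Euc N) (hsol : IsSol ψ τ f sol)
    (τ' : ℝ)
    (us : Euc N) :
    Cardinal.mk ↥(SSAT sol fd (ubar ψ τ us) (Set.Ioc 0 τ') ∩ Dgrid ψ τ) ≤
      Cardinal.mk ↥((pJ ψ (Jset ψ τ us) '' SSAT sol fd (ubar ψ τ us) (Set.Ioc 0 τ')) ∩
        JgridJ ψ τ (Jset ψ τ us)) := by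
  rw [← Cardinal.mk_image_eq_of_injOn _ _ (hsol.injOn_pJ hf fd us _)]
  refine Cardinal.mk_le_mk_of_subset ?_
  rintro _ ⟨u, ⟨huS, huD⟩, rfl⟩
  exact ⟨mem_image_of_mem _ huS, pJ_mem_JgridJ _ huD⟩

/-- the number of grid points in `SSAT(ū*, (0,τ'])` is at most the number
of points of the grid `τℤ^{J(u*)}` lying in `p(SSAT(ū*, (0,τ']))`. -/
theorem stmt9 {N : ℕ} (hN : 1 ≤ N) (ψ : Module.Basis (Fin N) ℝ (Euc N)) (τ : ℝ) (hτ : 0 < τ)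
    (f : Euc N → ℝ) (hf : GoodNorm f) (fd : Euc N → ℝ) (hfd : IsNormLike fd)
    (sol : Euc N → Euc N) (hsol : IsSol ψ τ f sol)
    (τ' : ℝ) (hτ' : 0 < τ')
    (us : Euc N) (hus : us ∈ frontier (cube0 ψ τ)) :
    Cardinal.mk ↥(SSAT sol fd (ubar ψ τ us) (Set.Ioc 0 τ') ∩ Dgrid ψ τ) ≤
      Cardinal.mk ↥((pJ ψ (Jset ψ τ us) '' SSAT sol fd (ubar ψ τ us) (Set.Ioc 0 τ')) ∩
        JgridJ ψ τ (Jset ψ τ us)) :=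
  stmt9_general ψ τ f hf fd sol hsol τ' us
end
end
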